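/- Let f be the fourth smallest real root of P(x) = −80 + 128x + 504x² − 768x³ − 845x⁴ + 1096x⁵ + 256x⁶. Then f is a solution of the equation (2x−1)/(2√(5−8x) − 1) = 1 − x√(4x²−1) − 2x², and the only other positive solution of this equation is x = 5/8. -/
import Mathlib

noncomputable def Ppoly (x : ℝ) : ℝ :=
  -80 + 128 * x + 504 * x ^ 2 - 768 * x ^ 3 - 845 * x ^ 4 + 1096 * x ^ 5 + 256 * x ^ 6

open Polynomial in
noncomputable def Pq : Polynomial ℝ :=
  C (-80) + C 128 * X + C 504 * X ^ 2 - C 768 * X ^ 3 - C 845 * X ^ 4 + C 1096 * X ^ 5 + C 256 * X ^ 6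

lemma Pq_natDegree : Pq.natDegree = 6 := by
  unfold Pq; compute_degree!

lemma Pq_ne_zero : Pq ≠ 0 := fun h => by
  have := Pq_natDegree; rw [h] at this; simp at this

lemma Pq_eval (x : ℝ) : Pq.eval x = Ppoly x := by
  simp [Pq, Ppoly]

lemma Ppoly_cont : Continuous Ppoly := by
  unfold Ppoly; continuity

lemma ivt_up {lo hi : ℝ} (hle : lo ≤ hi) (h1 : Ppoly lo ≤ 0) (h2 : 0 ≤ Ppoly hi) :
    ∃ x, lo ≤ x ∧ x ≤ hi ∧ Ppoly x = 0 := by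
  obtain ⟨x, hx, hx0⟩ := intermediate_value_Icc hle Ppoly_cont.continuousOn ⟨h1, h2⟩
  exact ⟨x, hx.1, hx.2, hx0⟩

lemma ivt_down {lo hi : ℝ} (hle : lo ≤ hi) (h1 : 0 ≤ Ppoly lo) (h2 : Ppoly hi ≤ 0) :
    ∃ x, lo ≤ x ∧ x ≤ hi ∧ Ppoly x = 0 := by
  obtain ⟨x, hx, hx0⟩ := intermediate_value_Icc' hle Ppoly_cont.continuousOn ⟨h2, h1⟩
  exact ⟨x, hx.1, hx.2, hx0⟩

lemma six_roots {a b c d e g : ℝ}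
    (ha : Ppoly a = 0) (hb : Ppoly b = 0) (hc : Ppoly c = 0)
    (hd : Ppoly d = 0) (he : Ppoly e = 0) (hg : Ppoly g = 0)
    (h1 : a < b) (h2 : b < c) (h3 : c < d) (h4 : d < e) (h5 : e < g) :
    ∀ x : ℝ, Ppoly x = 0 → x = a ∨ x = b ∨ x = c ∨ x = d ∨ x = e ∨ x = g := by
  intro x hx
  by_contra hcon
  push_neg at hcon
  obtain ⟨n1, n2, n3, n4, n5, n6⟩ := hcon
  have hsub : ({x, a, b, c, d, e, g} : Multiset ℝ) ⊆ Pq.roots := by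
    intro z hz
    rw [Polynomial.mem_roots Pq_ne_zero, Polynomial.IsRoot, Pq_eval]
    simp only [Multiset.insert_eq_cons, Multiset.mem_cons, Multiset.mem_singleton] at hz
    rcases hz with rfl|rfl|rfl|rfl|rfl|rfl|rfl <;> assumption
  have hnodup : ({x, a, b, c, d, e, g} : Multiset ℝ).Nodup := by
    simp only [Multiset.insert_eq_cons, Multiset.nodup_cons, Multiset.mem_cons,
      Multiset.mem_singleton, Multiset.nodup_singleton, and_true, not_or]
    refine ⟨⟨n1, n2, n3, n4, n5, n6⟩, ⟨?_, ?_, ?_, ?_, ?_⟩, ⟨?_, ?_, ?_, ?_⟩,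
      ⟨?_, ?_, ?_⟩, ⟨?_, ?_⟩, ?_⟩ <;> intro h <;> linarith
  have hle := (Multiset.le_iff_subset hnodup).2 hsub
  have hcard := Multiset.card_le_card hle
  have h6 := Pq.card_roots'
  rw [Pq_natDegree] at h6
  simp [Multiset.insert_eq_cons] at hcard
  omega

/-- The equation `(2x−1)/(2√(5−8x) − 1) = 1 − x√(4x²−1) − 2x²`. -/
noncomputable def eqn (x : ℝ) : Prop :=
  (2 * x - 1) / (2 * Real.sqrt (5 - 8 * x) - 1) =
    1 - x * Real.sqrt (4 * x ^ 2 - 1) - 2 * x ^ 2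

/-- The domain where both sides are defined. -/
def inDom (x : ℝ) : Prop :=
  1 ≤ 4 * x ^ 2 ∧ 0 ≤ 5 - 8 * x ∧ 2 * Real.sqrt (5 - 8 * x) ≠ 1

lemma sqb_lower' {s v lo : ℝ} (hs0 : 0 ≤ s) (hs2 : s ^ 2 = v) (hlo : 0 ≤ lo)
    (h : lo ^ 2 ≤ v) : lo ≤ s := by nlinarith

lemma sqb_upper' {s v hi : ℝ} (hs0 : 0 ≤ s) (hs2 : s ^ 2 = v) (hhi : 0 ≤ hi)
    (h : v ≤ hi ^ 2) : s ≤ hi := by nlinarith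

lemma pigeon4 {a b c d r1 r2 r3 : ℝ} (hab : a < b) (hbc : b < c) (hcd : c < d)
    (h12 : r1 < r2) (h23 : r2 < r3)
    (qa : a = r1 ∨ a = r2 ∨ a = r3) (qb : b = r1 ∨ b = r2 ∨ b = r3)
    (qc : c = r1 ∨ c = r2 ∨ c = r3) (qd : d = r1 ∨ d = r2 ∨ d = r3) : False := by
  rcases qa with h | h | h <;> rcases qb with h' | h' | h' <;>
    rcases qc with h'' | h'' | h'' <;> rcases qd with h''' | h''' | h''' <;> linarith

lemma pick2 {a b r1 r2 r3 : ℝ} (h12 : r1 < r2) (h23 : r2 < r3) (hab : a < b)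
    (q1 : r1 = a ∨ r1 = b) (q2 : r2 = a ∨ r2 = b) (q3 : r3 = a ∨ r3 = b) : False := by
  rcases q1 with rfl | rfl <;> rcases q2 with h | h <;> rcases q3 with h' | h' <;> linarith

set_option maxHeartbeats 4000000 in
/-- Let `f` be the fourth smallest real root of
`P(x) = −80 + 128x + 504x² − 768x³ − 845x⁴ + 1096x⁵ + 256x⁶`. Then `f` solves
`(2x−1)/(2√(5−8x)−1) = 1 − x√(4x²−1) − 2x²`, and the only other positive solution
(in the domain of definition) is `x = 5/8`. -/
theorem stmt_5 (f : ℝ) (hroot : Ppoly f = 0)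
    (hfourth : ∃ r₁ r₂ r₃ : ℝ, r₁ < r₂ ∧ r₂ < r₃ ∧ r₃ < f ∧
      Ppoly r₁ = 0 ∧ Ppoly r₂ = 0 ∧ Ppoly r₃ = 0 ∧
      ∀ r : ℝ, Ppoly r = 0 → r < f → (r = r₁ ∨ r = r₂ ∨ r = r₃)) :
    (inDom f ∧ eqn f) ∧ (inDom (5/8) ∧ eqn (5/8)) ∧
      ∀ x : ℝ, 0 < x → inDom x → eqn x → x = f ∨ x = 5/8 := by
  obtain ⟨a, ha1, ha2, ha⟩ := ivt_down (lo := -5) (hi := -4.8) (by norm_num)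
    (by unfold Ppoly; norm_num) (by unfold Ppoly; norm_num)
  obtain ⟨b, hb1, hb2, hb⟩ := ivt_up (lo := -0.66) (hi := -0.65) (by norm_num)
    (by unfold Ppoly; norm_num) (by unfold Ppoly; norm_num)
  obtain ⟨c, hc1, hc2, hc⟩ := ivt_down (lo := -0.53) (hi := -0.52) (by norm_num)
    (by unfold Ppoly; norm_num) (by unfold Ppoly; norm_num)
  obtain ⟨d, hd1, hd2, hd⟩ := ivt_up (lo := 0.5466) (hi := 0.5468) (by norm_num)
    (by unfold Ppoly; norm_num) (by unfold Ppoly; norm_num)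
  obtain ⟨e, he1, he2, he⟩ := ivt_down (lo := 0.577) (hi := 0.578) (by norm_num)
    (by unfold Ppoly; norm_num) (by unfold Ppoly; norm_num)
  obtain ⟨g, hg1, hg2, hg⟩ := ivt_up (lo := 0.596) (hi := 0.597) (by norm_num)
    (by unfold Ppoly; norm_num) (by unfold Ppoly; norm_num)
  have hall := six_roots ha hb hc hd he hg (by linarith) (by linarith) (by linarith)
    (by linarith) (by linarith)
  obtain ⟨r1, r2, r3, h12, h23, h3f, hr1, hr2, hr3, hmax⟩ := hfourth
  have hfd : f = d := by
    rcases hall f hroot with rfl | rfl | rfl | rfl | rfl | rfl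
    · rcases hall r3 hr3 with h | h | h | h | h | h <;> linarith
    · rcases hall r2 hr2 with h | h | h | h | h | h <;>
        rcases hall r3 hr3 with h' | h' | h' | h' | h' | h' <;> linarith
    · have w : ∀ r, Ppoly r = 0 → r < f → r = a ∨ r = b := by
        intro r hr hrc
        rcases hall r hr with h | h | h | h | h | h
        exacts [Or.inl h, Or.inr h, by linarith, by linarith, by linarith, by linarith]
      exact (pick2 h12 h23 (by linarith) (w r1 hr1 (by linarith))
        (w r2 hr2 (by linarith)) (w r3 hr3 (by linarith))).elim
    · rfl
    · exact (pigeon4 (show a < b by linarith) (show b < c by linarith)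
        (show c < d by linarith) h12 h23
        (hmax a ha (by linarith)) (hmax b hb (by linarith))
        (hmax c hc (by linarith)) (hmax d hd (by linarith))).elim
    · exact (pigeon4 (show a < b by linarith) (show b < c by linarith)
        (show c < d by linarith) h12 h23
        (hmax a ha (by linarith)) (hmax b hb (by linarith))
        (hmax c hc (by linarith)) (hmax d hd (by linarith))).elim
  clear hmax hr1 hr2 hr3 h12 h23 h3f hroot
  subst hfd
  have partB : inDom (5/8) ∧ eqn (5/8) := by
    have e1 : Real.sqrt (5 - 8 * (5/8 : ℝ)) = 0 := by norm_num
    have e2 : Real.sqrt (4 * (5/8 : ℝ) ^ 2 - 1) = 3/4 := by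
      rw [show (4 * (5/8 : ℝ) ^ 2 - 1) = (3/4) ^ 2 by norm_num,
        Real.sqrt_sq (by norm_num : (0:ℝ) ≤ 3/4)]
    refine ⟨⟨by norm_num, by norm_num, ?_⟩, ?_⟩
    · rw [e1]; norm_num
    · show (2 * (5/8 : ℝ) - 1) / (2 * Real.sqrt (5 - 8 * (5/8 : ℝ)) - 1) =
        1 - (5/8 : ℝ) * Real.sqrt (4 * (5/8 : ℝ) ^ 2 - 1) - 2 * (5/8 : ℝ) ^ 2
      rw [e1, e2]; norm_num
  have partA : inDom f ∧ eqn f := by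
    have hP : (-80:ℝ) + 128 * f + 504 * f ^ 2 - 768 * f ^ 3 - 845 * f ^ 4
        + 1096 * f ^ 5 + 256 * f ^ 6 = 0 := hd
    set s := Real.sqrt (5 - 8 * f) with hs_def
    set t := Real.sqrt (4 * f ^ 2 - 1) with ht_def
    have hf0 : (0:ℝ) ≤ f := by linarith
    have h2l : (0.5466 : ℝ) * f ≤ f ^ 2 := by
      linarith [mul_nonneg hf0 (by linarith : (0:ℝ) ≤ f - 0.5466)]
    have h2u : f ^ 2 ≤ (0.5468 : ℝ) * f := by
      linarith [mul_nonneg hf0 (by linarith : (0:ℝ) ≤ 0.5468 - f)]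
    have h3l : (0.5466 : ℝ) * f ^ 2 ≤ f ^ 3 := by
      linarith [mul_nonneg (sq_nonneg f) (by linarith : (0:ℝ) ≤ f - 0.5466)]
    have h3u : f ^ 3 ≤ (0.5468 : ℝ) * f ^ 2 := by
      linarith [mul_nonneg (sq_nonneg f) (by linarith : (0:ℝ) ≤ 0.5468 - f)]
    have h4l : (0.5466 : ℝ) * f ^ 3 ≤ f ^ 4 := by
      linarith [mul_nonneg (mul_nonneg (sq_nonneg f) hf0) (by linarith : (0:ℝ) ≤ f - 0.5466)]
    have h4u : f ^ 4 ≤ (0.5468 : ℝ) * f ^ 3 := by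
      linarith [mul_nonneg (mul_nonneg (sq_nonneg f) hf0) (by linarith : (0:ℝ) ≤ 0.5468 - f)]
    have h5l : (0.5466 : ℝ) * f ^ 4 ≤ f ^ 5 := by
      linarith [mul_nonneg (mul_nonneg (sq_nonneg f) (sq_nonneg f))
        (by linarith : (0:ℝ) ≤ f - 0.5466)]
    have h5u : f ^ 5 ≤ (0.5468 : ℝ) * f ^ 4 := by
      linarith [mul_nonneg (mul_nonneg (sq_nonneg f) (sq_nonneg f))
        (by linarith : (0:ℝ) ≤ 0.5468 - f)]
    have hs0 : 0 ≤ s := Real.sqrt_nonneg _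
    have ht0 : 0 ≤ t := Real.sqrt_nonneg _
    have hs2 : s ^ 2 = 5 - 8 * f := Real.sq_sqrt (by linarith)
    have ht2 : t ^ 2 = 4 * f ^ 2 - 1 := Real.sq_sqrt (by linarith)
    have hsl : (0.79 : ℝ) ≤ s := sqb_lower' hs0 hs2 (by norm_num) (by linarith)
    have hsu : s ≤ (0.7921 : ℝ) := sqb_upper' hs0 hs2 (by norm_num) (by linarith)
    have htl : (0.44 : ℝ) ≤ t := sqb_lower' ht0 ht2 (by norm_num) (by linarith)
    have htu : t ≤ (0.4428 : ℝ) := sqb_upper' ht0 ht2 (by norm_num) (by linarith)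
    have hftu : f * t ≤ (0.5468 : ℝ) * t := by
      linarith [mul_nonneg ht0 (by linarith : (0:ℝ) ≤ 0.5468 - f)]
    have hA : (0.159 : ℝ) ≤ 1 - 2 * f ^ 2 - f * t := by linarith
    have hbeta : (0 : ℝ) ≤ 40 * f - 68 * f ^ 2 - 76 * f ^ 3 + 128 * f ^ 4 := by linarith
    have halpha : (-20 : ℝ) + 32 * f + 103 * f ^ 2 - 168 * f ^ 3 - 152 * f ^ 4
        + 256 * f ^ 5 ≤ 0 := by linarith
    have hsq : ((-20 : ℝ) + 32 * f + 103 * f ^ 2 - 168 * f ^ 3 - 152 * f ^ 4 + 256 * f ^ 5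
          + (40 * f - 68 * f ^ 2 - 76 * f ^ 3 + 128 * f ^ 4) * t)
        * ((-20 : ℝ) + 32 * f + 103 * f ^ 2 - 168 * f ^ 3 - 152 * f ^ 4 + 256 * f ^ 5
          - (40 * f - 68 * f ^ 2 - 76 * f ^ 3 + 128 * f ^ 4) * t) = 0 := by
      linear_combination (8 * f - 5) * hP
        - (40 * f - 68 * f ^ 2 - 76 * f ^ 3 + 128 * f ^ 4) ^ 2 * ht2
    have h4 : (-20 : ℝ) + 32 * f + 103 * f ^ 2 - 168 * f ^ 3 - 152 * f ^ 4 + 256 * f ^ 5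
        + (40 * f - 68 * f ^ 2 - 76 * f ^ 3 + 128 * f ^ 4) * t = 0 := by
      rcases mul_eq_zero.1 hsq with h | h
      · exact h
      · linarith [mul_nonneg hbeta ht0]
    have h3 : (2 * f - 2 * f ^ 2 - f * t) ^ 2
        = (2 * s * (1 - 2 * f ^ 2 - f * t)) ^ 2 := by
      linear_combination h4 + f ^ 2 * (32 * f - 19) * ht2
        - 4 * (1 - 2 * f ^ 2 - f * t) ^ 2 * hs2
    have hL : 2 * f - 2 * f ^ 2 - f * t = 2 * s * (1 - 2 * f ^ 2 - f * t) := by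
      have hz : (2 * f - 2 * f ^ 2 - f * t - 2 * s * (1 - 2 * f ^ 2 - f * t))
          * (2 * f - 2 * f ^ 2 - f * t + 2 * s * (1 - 2 * f ^ 2 - f * t)) = 0 := by
        linear_combination h3
      rcases mul_eq_zero.1 hz with h | h
      · linarith
      · linarith [mul_nonneg hs0 (by linarith : (0:ℝ) ≤ 1 - 2 * f ^ 2 - f * t)]
    refine ⟨⟨by linarith, by linarith, by intro hh; linarith⟩, ?_⟩
    show (2 * f - 1) / (2 * s - 1) = 1 - f * t - 2 * f ^ 2
    rw [div_eq_iff (by intro hh; linarith : 2 * s - 1 ≠ 0)]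
    linear_combination hL
  refine ⟨partA, partB, ?_⟩
  intro x hx hdom heq
  obtain ⟨hq1, hq2, hq3⟩ := hdom
  have heq' : (2 * x - 1) / (2 * Real.sqrt (5 - 8 * x) - 1) =
      1 - x * Real.sqrt (4 * x ^ 2 - 1) - 2 * x ^ 2 := heq
  clear heq
  set s := Real.sqrt (5 - 8 * x) with hs_def
  set t := Real.sqrt (4 * x ^ 2 - 1) with ht_def
  have hs0 : 0 ≤ s := Real.sqrt_nonneg _
  have ht0 : 0 ≤ t := Real.sqrt_nonneg _
  have hs2 : s ^ 2 = 5 - 8 * x := Real.sq_sqrt (by linarith)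
  have ht2 : t ^ 2 = 4 * x ^ 2 - 1 := Real.sq_sqrt (by linarith)
  have hsne : 2 * s - 1 ≠ 0 := fun hh => hq3 (by linarith)
  rw [div_eq_iff hsne] at heq'
  have hL : 2 * x - 2 * x ^ 2 - x * t = 2 * s * (1 - 2 * x ^ 2 - x * t) := by
    linear_combination heq'
  have h3 : (2 * x - 2 * x ^ 2 - x * t) ^ 2
      - 4 * (5 - 8 * x) * (1 - 2 * x ^ 2 - x * t) ^ 2 = 0 := by
    linear_combination (2 * x - 2 * x ^ 2 - x * t + 2 * s * (1 - 2 * x ^ 2 - x * t)) * hL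
      + 4 * (1 - 2 * x ^ 2 - x * t) ^ 2 * hs2
  have h4 : (-20 : ℝ) + 32 * x + 103 * x ^ 2 - 168 * x ^ 3 - 152 * x ^ 4 + 256 * x ^ 5
      + (40 * x - 68 * x ^ 2 - 76 * x ^ 3 + 128 * x ^ 4) * t = 0 := by
    linear_combination h3 - x ^ 2 * (32 * x - 19) * ht2
  have hQ : (8 * x - 5) * Ppoly x = 0 := by
    unfold Ppoly
    linear_combination ((-20 : ℝ) + 32 * x + 103 * x ^ 2 - 168 * x ^ 3 - 152 * x ^ 4
        + 256 * x ^ 5 - (40 * x - 68 * x ^ 2 - 76 * x ^ 3 + 128 * x ^ 4) * t) * h4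
      + (40 * x - 68 * x ^ 2 - 76 * x ^ 3 + 128 * x ^ 4) ^ 2 * ht2
  rcases mul_eq_zero.1 hQ with h85 | hPx
  · right; linarith
  · rcases hall x hPx with rfl | rfl | rfl | hxf | hxe | hxg
    · exact absurd hx (by linarith)
    · exact absurd hx (by linarith)
    · exact absurd hx (by linarith)
    · exact Or.inl hxf
    · exfalso
      have hbx1 : (0.577 : ℝ) ≤ x := by rw [hxe]; exact he1
      have hbx2 : x ≤ (0.578 : ℝ) := by rw [hxe]; exact he2
      have hsl : (0.61 : ℝ) ≤ s := sqb_lower' hs0 hs2 (by norm_num) (by linarith)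
      have hsu : s ≤ (0.62 : ℝ) := sqb_upper' hs0 hs2 (by norm_num) (by linarith)
      have htl : (0.57 : ℝ) ≤ t := sqb_lower' ht0 ht2 (by norm_num) (by nlinarith)
      have htu : t ≤ (0.581 : ℝ) := sqb_upper' ht0 ht2 (by norm_num) (by nlinarith)
      have hx2l : (0.577 : ℝ) * x ≤ x ^ 2 := by
        linarith [mul_nonneg hx.le (by linarith : (0:ℝ) ≤ x - 0.577)]
      have hx2u : x ^ 2 ≤ (0.578 : ℝ) * x := by
        linarith [mul_nonneg hx.le (by linarith : (0:ℝ) ≤ 0.578 - x)]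
      have hxtl : (0.577 : ℝ) * t ≤ x * t := by
        linarith [mul_nonneg ht0 (by linarith : (0:ℝ) ≤ x - 0.577)]
      have hxtu : x * t ≤ (0.578 : ℝ) * t := by
        linarith [mul_nonneg ht0 (by linarith : (0:ℝ) ≤ 0.578 - x)]
      have hRu : 1 - x * t - 2 * x ^ 2 ≤ 0.006 := by linarith
      have hRl : (-0.006 : ℝ) ≤ 1 - x * t - 2 * x ^ 2 := by linarith
      linarith [heq', mul_nonneg (by linarith : (0:ℝ) ≤ 0.006 - (1 - x * t - 2 * x ^ 2))
        (by linarith : (0:ℝ) ≤ 2 * s - 1 - 0.22)]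
    · exfalso
      have hbx1 : (0.596 : ℝ) ≤ x := by rw [hxg]; exact hg1
      have hbx2 : x ≤ (0.597 : ℝ) := by rw [hxg]; exact hg2
      have hsl : (0.473 : ℝ) ≤ s := sqb_lower' hs0 hs2 (by norm_num) (by linarith)
      have hsu : s ≤ (0.4817 : ℝ) := sqb_upper' hs0 hs2 (by norm_num) (by linarith)
      have htl : (0.648 : ℝ) ≤ t := sqb_lower' ht0 ht2 (by norm_num) (by nlinarith)
      have htu : t ≤ (0.653 : ℝ) := sqb_upper' ht0 ht2 (by norm_num) (by nlinarith)
      have hx2l : (0.596 : ℝ) * x ≤ x ^ 2 := by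
        linarith [mul_nonneg hx.le (by linarith : (0:ℝ) ≤ x - 0.596)]
      have hx2u : x ^ 2 ≤ (0.597 : ℝ) * x := by
        linarith [mul_nonneg hx.le (by linarith : (0:ℝ) ≤ 0.597 - x)]
      have hxtl : (0.596 : ℝ) * t ≤ x * t := by
        linarith [mul_nonneg ht0 (by linarith : (0:ℝ) ≤ x - 0.596)]
      have hxtu : x * t ≤ (0.597 : ℝ) * t := by
        linarith [mul_nonneg ht0 (by linarith : (0:ℝ) ≤ 0.597 - x)]
      have hRu : 1 - x * t - 2 * x ^ 2 ≤ -0.096 := by linarith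
      have hRl : (-0.103 : ℝ) ≤ 1 - x * t - 2 * x ^ 2 := by linarith
      linarith [heq', mul_nonneg (by linarith : (0:ℝ) ≤ (1 - x * t - 2 * x ^ 2) + 0.103)
        (by linarith : (0:ℝ) ≤ 1 - 2 * s - 0.0366)]
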